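/- arXiv:2404.13716 — 2 statements merged into one kernel-verified Lean document; each statement's English description precedes it below -/
import Mathlib

section
/- Let A ∈ ℝ^{s×s} with (V_sᵀ A V_s)e₁ = e₁ and c₁ = 0. Then A𝟙 = e₁. -/
/-!
Because `c 0 = 0`, the first row of the Vandermonde matrix `V` is `e₀`, so `Vᵀ e₀ = e₀`, while its
first column is `𝟙 = V e₀`. Hence `Vᵀ (A 𝟙) = (Vᵀ A V) e₀ = e₀ = Vᵀ e₀`, and `Vᵀ` is injective since
distinct nodes make `V` invertible.
-/

open Matrix

theorem mulVec_eq_of_transpose_mul_mul_mulVec {R ι : Type*} [CommSemiring R] [Fintype ι]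
    [DecidableEq ι] {V A : Matrix ι ι R} (hV : IsUnit V) {x y : ι → R}
    (h : (Vᵀ * A * V) *ᵥ x = Vᵀ *ᵥ y) : A *ᵥ (V *ᵥ x) = y :=
  mulVec_injective_of_isUnit ((isUnit_transpose V).mpr hV) <| by
    rwa [mulVec_mulVec, mulVec_mulVec]

section CommRing

variable {R : Type*} [CommRing R]

theorem vandermonde_mulVec_single_zero {n : ℕ} (c : Fin (n + 1) → R) :
    vandermonde c *ᵥ Pi.single 0 1 = fun _ => 1 := by
  ext i
  simp [vandermonde_apply]

theorem vandermonde_transpose_mulVec_single_zero {n : ℕ} {c : Fin (n + 1) → R} (hc : c 0 = 0) :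
    (vandermonde c)ᵀ *ᵥ Pi.single 0 1 = Pi.single 0 1 := by
  ext j
  rcases eq_or_ne j 0 with rfl | hj
  · simp [vandermonde_apply]
  · simp [vandermonde_apply, hc, hj, Fin.val_ne_zero_iff.mpr hj]

end CommRing

/-- Lemma 5.2(b): if `(V_sᵀAV_s)e₁ = e₁` and `c₁ = 0` (nodes
pairwise distinct so `V_s` is invertible), then `A𝟙 = e₁`. -/
theorem lsrk_column_property (n : ℕ) (c : Fin (n + 1) → ℝ)
    (hc : Function.Injective c) (hc1 : c 0 = 0)
    (A : Matrix (Fin (n + 1)) (Fin (n + 1)) ℝ)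
    (hA : ∀ i : Fin (n + 1),
      (((Matrix.of fun (i j : Fin (n + 1)) => c i ^ (j : ℕ)).transpose * A *
          (Matrix.of fun (i j : Fin (n + 1)) => c i ^ (j : ℕ)))) i 0 =
        if i = 0 then 1 else 0) :
    A *ᵥ (fun _ : Fin (n + 1) => (1 : ℝ)) = Pi.single 0 1 := by
  have hV : IsUnit (vandermonde c) := by
    rw [isUnit_iff_isUnit_det, isUnit_iff_ne_zero]
    exact det_vandermonde_ne_zero_iff.mpr hc
  have hcol : ((vandermonde c)ᵀ * A * vandermonde c) *ᵥ Pi.single 0 1 = Pi.single 0 1 := by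
    ext i
    rw [mulVec_single_one, Pi.single_apply]
    exact hA i
  rw [← vandermonde_mulVec_single_zero c]
  refine mulVec_eq_of_transpose_mul_mul_mulVec hV ?_
  rw [hcol, vandermonde_transpose_mulVec_single_zero hc1]
end

section
/- Suppose 𝟙ᵀB(σ) ≡ 𝟙ᵀA (independent of σ), e₁ᵀ(V_sᵀAV_s)e_{k+1} = 1 for k = 0,...,s−1 (i.e. 𝟙ᵀAc^k = 1 for 0 ≤ k ≤ s−1), and 𝟙ᵀK c^{s-1} = 1/s. Then 𝟙ᵀ(A c^s − B(σ)(c−𝟙)^s σ^{−s} − s K c^{s−1}) = (1 − σ^{−s})(𝟙ᵀA c^s − 1) for every σ ≠ 0, where c^k denotes the entrywise k-th power of the node vector and (c−𝟙)^s the entrywise power. -/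
open Matrix Finset

theorem sub_one_pow_eq_pow_add_sum {R : Type*} [CommRing R] (x : R) (s : ℕ) :
    (x - 1) ^ s = x ^ s + ∑ k ∈ range s, ((-1) ^ (k + s) * s.choose k : R) * x ^ k := by
  rw [sub_pow, sum_range_succ, add_comm]
  congr 1
  · simp [← two_mul, pow_mul]
  · exact sum_congr rfl fun k _ => by ring

/-- The polynomial `(X - 1)^s - X^s` has degree `< s` and takes the value `-1` at `X = 1`, so it
integrates to `-1` against any weight `w` that is exact on polynomials of degree `< s`. -/
theorem dotProduct_sub_one_pow {ι R : Type*} [Fintype ι] [CommRing R] {s : ℕ} (hs : 0 < s)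
    (w c : ι → R) (hw : ∀ k < s, w ⬝ᵥ (fun i => c i ^ k) = 1) :
    w ⬝ᵥ (fun i => (c i - 1) ^ s) = w ⬝ᵥ (fun i => c i ^ s) - 1 := by
  set a : ℕ → R := fun k => (-1) ^ (k + s) * s.choose k
  have hvec : (fun i => (c i - 1) ^ s) =
      (fun i => c i ^ s) + ∑ k ∈ range s, a k • fun i => c i ^ k := by
    ext i
    simp only [Pi.add_apply, Finset.sum_apply, Pi.smul_apply, smul_eq_mul]
    exact sub_one_pow_eq_pow_add_sum (c i) s
  have hsum : ∑ k ∈ range s, a k = -1 := by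
    have h := sub_one_pow_eq_pow_add_sum (1 : R) s
    simp only [sub_self, zero_pow hs.ne', one_pow, mul_one] at h
    exact (neg_eq_of_add_eq_zero_right h.symm).symm
  rw [hvec, dotProduct_add, dotProduct_sum,
    sum_congr rfl fun k hk => by rw [dotProduct_smul, hw k (mem_range.mp hk), smul_eq_mul, mul_one],
    hsum, sub_eq_add_neg]

/-- Lemma 5.1(b): under `𝟙ᵀB(σ) ≡ 𝟙ᵀA`, `𝟙ᵀA c^k = 1` for
`0 ≤ k ≤ s−1` and `𝟙ᵀK c^{s−1} = 1/s`, one has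
`𝟙ᵀ(A c^s − σ^{−s} B(σ)(c−𝟙)^s − s K c^{s−1}) = (1 − σ^{−s})(𝟙ᵀA c^s − 1)`
for every `σ ≠ 0` (powers of vectors taken entrywise). -/
theorem superconvergence_order_s (s : ℕ) (hs : 0 < s) (c : Fin s → ℝ)
    (A K : Matrix (Fin s) (Fin s) ℝ) (B : ℝ → Matrix (Fin s) (Fin s) ℝ)
    (hB : ∀ σ : ℝ, (fun _ : Fin s => (1 : ℝ)) ᵥ* B σ = (fun _ : Fin s => (1 : ℝ)) ᵥ* A)
    (hA : ∀ k : ℕ, k ≤ s - 1 →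
      ((fun _ : Fin s => (1 : ℝ)) ᵥ* A) ⬝ᵥ (fun i => c i ^ k) = 1)
    (hK : ((fun _ : Fin s => (1 : ℝ)) ᵥ* K) ⬝ᵥ (fun i => c i ^ (s - 1)) = 1 / (s : ℝ)) :
    ∀ σ : ℝ, σ ≠ 0 →
      (fun _ : Fin s => (1 : ℝ)) ⬝ᵥ
          (A *ᵥ (fun i => c i ^ s) -
            σ⁻¹ ^ s • (B σ *ᵥ (fun i => (c i - 1) ^ s)) -
            (s : ℝ) • (K *ᵥ (fun i => c i ^ (s - 1)))) =
        (1 - σ⁻¹ ^ s) * (((fun _ : Fin s => (1 : ℝ)) ᵥ* A) ⬝ᵥ (fun i => c i ^ s) - 1) := by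
  intro σ _
  have hshift := dotProduct_sub_one_pow hs ((fun _ => 1) ᵥ* A) c
    fun k hk => hA k (Nat.le_sub_one_of_lt hk)
  have hs' : (s : ℝ) ≠ 0 := Nat.cast_ne_zero.mpr hs.ne'
  rw [dotProduct_sub, dotProduct_sub, dotProduct_smul, dotProduct_smul, dotProduct_mulVec,
    dotProduct_mulVec, dotProduct_mulVec, hB, hK, hshift, smul_eq_mul, smul_eq_mul,
    mul_one_div_cancel hs']
  ring
end
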